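/- Fix T ∈ (0,∞), constants A > 0 and α_0 > 0, and assume 0 ≤ a_{i,j} = a_{j,i} ≤ A(i+j), 0 ≤ p_{i,j} = p_{j,i} ≤ 1, and 0 ≤ N_{i,j}^s ≤ α_0 for all i, j ≥ 1 and s = 1,…,i+j−1. Let n ≥ 2, let w^n = (w_i^n)_{i≥1} be the zero-extension of the unique nonnegative solution of the truncated coagulation–collisional-breakage system on [0,T] with nonnegative initial data of first moment Λ_1 = ∑_{i≥1} i w_i^0, and let x = (x_i)_{i≥1} solve the majorant system d/dt x_i = (A/2) ∑_{j=1}^{i−1} i x_j x_{i−j} + A α_0 Λ_1² with x_i(0) = x_i^0 for each i ≥ 1. If w_i^n(0) ≤ x_i(0) for every i ∈ ℕ, then w_i^n(t) ≤ x_i(t) for every i ∈ ℕ and every t ∈ [0,T]. -/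

import Mathlib

/-!
The truncated system conserves the first moment `∑ i wᵢ`: for every collision of sizes `l` and `k`,
coagulation and breakage together return the mass `l + k` that the loss terms remove. So
`∑ i wᵢ(t) = Λ₁`, the number density `∑ wᵢ(t)` is at most `Λ₁`, and the breakage gain into size `i`
is at most `(α₀ A / 2) ∑ (l + k) w_l w_k ≤ A α₀ Λ₁²`. By strong induction on `i`: once `w_j ≤ x_j`
for `j < i`, the coagulation gain is at most `(A/2) ∑ i x_j x_{i-j}`, so the right-hand side of the
equation for `wᵢ` is below that of `xᵢ`, and comparing derivatives on `[0, T]` gives `wᵢ ≤ xᵢ`;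
for `i > n`, `wᵢ = 0` while `xᵢ` is nondecreasing.
-/

/-- The right-hand side of the truncated discrete coagulation equations with
collisional breakage. -/
noncomputable def truncRHS (a p : ℕ → ℕ → ℝ) (N : ℕ → ℕ → ℕ → ℝ) (n i : ℕ)
    (w : ℕ → ℝ) : ℝ :=
    (1/2) * ∑ j ∈ Finset.Icc 1 (i-1), p j (i-j) * a j (i-j) * w j * w (i-j)
  - ∑ j ∈ Finset.Icc 1 (n-i), a i j * w i * w j
  + (1/2) * ∑ j ∈ Finset.Icc (i+1) n, ∑ k ∈ Finset.Icc 1 (j-1),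
      N (j-k) k i * (1 - p (j-k) k) * a (j-k) k * w (j-k) * w k

open Finset

theorem sum_Icc_sub_comm (i : ℕ) (f : ℕ → ℕ → ℝ) :
    ∑ j ∈ Icc 1 (i - 1), f (i - j) j = ∑ j ∈ Icc 1 (i - 1), f j (i - j) :=
  sum_nbij' (i - ·) (i - ·) (fun j hj => by simp only [mem_Icc] at *; omega)
    (fun j hj => by simp only [mem_Icc] at *; omega)
    (fun j hj => by simp only [mem_Icc] at *; omega)
    (fun j hj => by simp only [mem_Icc] at *; omega)
    (fun j hj => by rw [mem_Icc] at hj; rw [Nat.sub_sub_self (by omega)])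

theorem sum_Icc_sum_Icc_tsub_comm (n : ℕ) (f : ℕ → ℕ → ℝ) :
    ∑ l ∈ Icc 1 n, ∑ k ∈ Icc 1 (n - l), f l k = ∑ l ∈ Icc 1 n, ∑ k ∈ Icc 1 (n - l), f k l :=
  sum_comm' fun l k => by simp only [mem_Icc]; omega

theorem sum_Icc_sum_Ioc_comm (n : ℕ) (f : ℕ → ℕ → ℝ) :
    ∑ i ∈ Icc 1 n, ∑ j ∈ Icc (i + 1) n, f i j = ∑ j ∈ Icc 1 n, ∑ i ∈ Icc 1 (j - 1), f i j :=
  sum_comm' fun i j => by simp only [mem_Icc]; omega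

theorem sum_Icc_sum_Icc_sub_eq (n : ℕ) (f : ℕ → ℕ → ℝ) :
    ∑ i ∈ Icc 1 n, ∑ j ∈ Icc 1 (i - 1), f j (i - j)
      = ∑ l ∈ Icc 1 n, ∑ k ∈ Icc 1 (n - l), f l k := by
  rw [sum_sigma', sum_sigma']
  refine sum_nbij' (fun q => ⟨q.2, q.1 - q.2⟩) (fun q => ⟨q.1 + q.2, q.1⟩) ?_ ?_ ?_ ?_ ?_ <;>
    rintro ⟨u, v⟩ h <;> simp_all [Sigma.ext_iff] <;> omega

theorem sum_mul_sum_Icc_sub_eq (n : ℕ) (g : ℕ → ℕ → ℝ) :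
    ∑ i ∈ Icc 1 n, (i : ℝ) * ∑ j ∈ Icc 1 (i - 1), g j (i - j)
      = ∑ l ∈ Icc 1 n, ∑ k ∈ Icc 1 (n - l), ((l : ℝ) + k) * g l k := by
  rw [← sum_Icc_sum_Icc_sub_eq n (fun l k => ((l : ℝ) + k) * g l k)]
  refine sum_congr rfl fun i _ => (mul_sum _ _ _).trans (sum_congr rfl fun j hj => ?_)
  rw [mem_Icc] at hj
  rw [← Nat.cast_add, Nat.add_sub_cancel' (by omega)]

theorem le_of_hasDerivWithinAt_le_Icc {a b : ℝ} {f g f' g' : ℝ → ℝ}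
    (hf : ∀ t ∈ Set.Icc a b, HasDerivWithinAt f (f' t) (Set.Icc a b) t)
    (hg : ∀ t ∈ Set.Icc a b, HasDerivWithinAt g (g' t) (Set.Icc a b) t)
    (hle : ∀ t ∈ Set.Icc a b, f' t ≤ g' t) (ha : f a ≤ g a) :
    ∀ t ∈ Set.Icc a b, f t ≤ g t := by
  intro t ht
  have hmono : MonotoneOn (fun s => g s - f s) (Set.Icc a b) :=
    monotoneOn_of_hasDerivWithinAt_nonneg (convex_Icc a b)
      (fun s hs => ((hg s hs).sub (hf s hs)).continuousWithinAt)
      (fun s hs => ((hg s (interior_subset hs)).sub (hf s (interior_subset hs))).mono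
        interior_subset)
      (fun s hs => sub_nonneg.2 (hle s (interior_subset hs)))
  have := hmono (Set.left_mem_Icc.2 (ht.1.trans ht.2)) ht ht.1
  linarith

theorem eq_of_hasDerivWithinAt_zero_Icc {a b : ℝ} {f : ℝ → ℝ}
    (hf : ∀ t ∈ Set.Icc a b, HasDerivWithinAt f 0 (Set.Icc a b) t) :
    ∀ t ∈ Set.Icc a b, f t = f a := by
  intro t ht
  have := (convex_Icc a b).norm_image_sub_le_of_norm_hasDerivWithin_le (C := 0) hf
    (fun _ _ => by simp) (Set.left_mem_Icc.2 (ht.1.trans ht.2)) ht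
  rwa [zero_mul, norm_le_zero_iff, sub_eq_zero] at this

noncomputable def coagGain (a p : ℕ → ℕ → ℝ) (i : ℕ) (v : ℕ → ℝ) : ℝ :=
  ∑ j ∈ Icc 1 (i - 1), p j (i - j) * a j (i - j) * v j * v (i - j)

noncomputable def coagLoss (a : ℕ → ℕ → ℝ) (n i : ℕ) (v : ℕ → ℝ) : ℝ :=
  ∑ j ∈ Icc 1 (n - i), a i j * v i * v j

noncomputable def breakageGain (a p : ℕ → ℕ → ℝ) (N : ℕ → ℕ → ℕ → ℝ) (n i : ℕ) (v : ℕ → ℝ) :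
    ℝ :=
  ∑ j ∈ Icc (i + 1) n, ∑ k ∈ Icc 1 (j - 1),
    N (j - k) k i * (1 - p (j - k) k) * a (j - k) k * v (j - k) * v k

noncomputable def majorantRHS (A α₀ Λ₁ : ℝ) (i : ℕ) (x : ℕ → ℝ) : ℝ :=
  A / 2 * ∑ j ∈ Icc 1 (i - 1), (i : ℝ) * x j * x (i - j) + A * α₀ * Λ₁ ^ 2

section

variable {A α₀ : ℝ} {a p : ℕ → ℕ → ℝ} {N : ℕ → ℕ → ℕ → ℝ} {n : ℕ}

theorem truncRHS_eq (i : ℕ) (v : ℕ → ℝ) :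
    truncRHS a p N n i v
      = 1 / 2 * coagGain a p i v - coagLoss a n i v + 1 / 2 * breakageGain a p N n i v :=
  rfl

theorem sum_mul_breakageGain
    (hN_mass : ∀ i j, 1 ≤ i → 1 ≤ j →
      ∑ s ∈ Icc 1 (i + j - 1), (Nat.cast s : ℝ) * N i j s = (i : ℝ) + (j : ℝ))
    (v : ℕ → ℝ) :
    ∑ i ∈ Icc 1 n, (i : ℝ) * breakageGain a p N n i v
      = ∑ j ∈ Icc 1 n, (j : ℝ) * ∑ k ∈ Icc 1 (j - 1),
          (1 - p k (j - k)) * (a k (j - k) * v k * v (j - k)) := by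
  simp only [breakageGain, mul_sum]
  rw [sum_Icc_sum_Ioc_comm]
  refine sum_congr rfl fun j _ => ?_
  refine (sum_comm.trans ?_).trans
    (sum_Icc_sub_comm j fun l k => (j : ℝ) * ((1 - p l k) * (a l k * v l * v k)))
  refine sum_congr rfl fun k hk => ?_
  rw [mem_Icc] at hk
  have hmass := hN_mass (j - k) k (by omega) (by omega)
  rw [Nat.sub_add_cancel (by omega : k ≤ j), ← Nat.cast_add, Nat.sub_add_cancel (by omega)]
    at hmass
  rw [← hmass, sum_mul]
  exact sum_congr rfl fun s _ => by ring

theorem two_mul_sum_mul_coagLoss (ha_symm : ∀ i j, a i j = a j i) (v : ℕ → ℝ) :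
    2 * ∑ i ∈ Icc 1 n, (i : ℝ) * coagLoss a n i v
      = ∑ j ∈ Icc 1 n, (j : ℝ) * ∑ k ∈ Icc 1 (j - 1), a k (j - k) * v k * v (j - k) := by
  refine Eq.trans ?_ (sum_mul_sum_Icc_sub_eq n fun l k => a l k * v l * v k).symm
  have hswap := sum_Icc_sum_Icc_tsub_comm n fun l k => (l : ℝ) * (a l k * v l * v k)
  rw [two_mul]
  simp only [coagLoss, mul_sum]
  nth_rw 2 [hswap]
  rw [← sum_add_distrib]
  refine sum_congr rfl fun l _ => ?_
  rw [← sum_add_distrib]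
  exact sum_congr rfl fun k _ => by rw [ha_symm k l]; ring

theorem sum_mul_truncRHS_eq_zero (ha_symm : ∀ i j, a i j = a j i)
    (hN_mass : ∀ i j, 1 ≤ i → 1 ≤ j →
      ∑ s ∈ Icc 1 (i + j - 1), (Nat.cast s : ℝ) * N i j s = (i : ℝ) + (j : ℝ))
    (v : ℕ → ℝ) :
    ∑ i ∈ Icc 1 n, (i : ℝ) * truncRHS a p N n i v = 0 := by
  have hgain_breakage : ∑ i ∈ Icc 1 n, (i : ℝ) * coagGain a p i v
      + ∑ i ∈ Icc 1 n, (i : ℝ) * breakageGain a p N n i v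
      = 2 * ∑ i ∈ Icc 1 n, (i : ℝ) * coagLoss a n i v := by
    rw [sum_mul_breakageGain hN_mass, two_mul_sum_mul_coagLoss ha_symm, ← sum_add_distrib]
    refine sum_congr rfl fun j _ => ?_
    rw [coagGain, ← mul_add, ← sum_add_distrib]
    exact congrArg _ (sum_congr rfl fun k _ => by ring)
  simp only [truncRHS_eq, mul_add, mul_sub, sum_add_distrib, sum_sub_distrib,
    mul_left_comm _ (1 / 2 : ℝ), ← mul_sum]
  linarith


theorem coagGain_le (ha_nonneg : ∀ i j, 0 ≤ a i j)
    (ha_bound : ∀ i j, 1 ≤ i → 1 ≤ j → a i j ≤ A * ((i : ℝ) + (j : ℝ)))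
    (hp_le : ∀ i j, p i j ≤ 1) {i : ℕ} {v x : ℕ → ℝ}
    (hv : ∀ j, 1 ≤ j → 0 ≤ v j) (hvx : ∀ j, 1 ≤ j → j < i → v j ≤ x j) :
    coagGain a p i v ≤ A * ∑ j ∈ Icc 1 (i - 1), (i : ℝ) * x j * x (i - j) := by
  rw [coagGain, mul_sum]
  refine sum_le_sum fun j hj => ?_
  rw [mem_Icc] at hj
  have hcast : (j : ℝ) + ((i - j : ℕ) : ℝ) = i := by
    rw [← Nat.cast_add, Nat.add_sub_cancel' (by omega)]
  have ha : a j (i - j) ≤ A * i := hcast ▸ ha_bound j (i - j) hj.1 (by omega)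
  have hpa : p j (i - j) * a j (i - j) ≤ A * i :=
    (mul_le_of_le_one_left (ha_nonneg _ _) (hp_le _ _)).trans ha
  have hvv : v j * v (i - j) ≤ x j * x (i - j) :=
    mul_le_mul (hvx j hj.1 (by omega)) (hvx (i - j) (by omega) (by omega)) (hv _ (by omega))
      ((hv j hj.1).trans (hvx j hj.1 (by omega)))
  calc p j (i - j) * a j (i - j) * v j * v (i - j)
      = (p j (i - j) * a j (i - j)) * (v j * v (i - j)) := by ring
    _ ≤ (A * i) * (x j * x (i - j)) :=
        mul_le_mul hpa hvv (mul_nonneg (hv j hj.1) (hv _ (by omega))) ((ha_nonneg _ _).trans ha)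
    _ = A * (i * x j * x (i - j)) := by ring

theorem breakageGain_le (hA : 0 ≤ A) (hα₀ : 0 ≤ α₀) (ha_nonneg : ∀ i j, 0 ≤ a i j)
    (ha_bound : ∀ i j, 1 ≤ i → 1 ≤ j → a i j ≤ A * ((i : ℝ) + (j : ℝ)))
    (hp_nonneg : ∀ i j, 0 ≤ p i j) (hN_nonneg : ∀ i j s, 0 ≤ N i j s)
    (hN_bound : ∀ i j s, 1 ≤ i → 1 ≤ j → s ∈ Icc 1 (i + j - 1) → N i j s ≤ α₀)
    {i : ℕ} (hi : 1 ≤ i) {v : ℕ → ℝ} (hv : ∀ j, 1 ≤ j → 0 ≤ v j) :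
    breakageGain a p N n i v
      ≤ α₀ * A * ∑ j ∈ Icc 1 n, (j : ℝ) * ∑ k ∈ Icc 1 (j - 1), v k * v (j - k) := by
  have hterm_nonneg : ∀ j, ∀ k ∈ Icc 1 (j - 1), 0 ≤ α₀ * A * j * (v (j - k) * v k) := by
    intro j k hk
    rw [mem_Icc] at hk
    exact mul_nonneg (by positivity) (mul_nonneg (hv _ (by omega)) (hv k hk.1))
  calc breakageGain a p N n i v
      ≤ ∑ j ∈ Icc (i + 1) n, ∑ k ∈ Icc 1 (j - 1), α₀ * A * j * (v (j - k) * v k) := by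
        refine sum_le_sum fun j hj => sum_le_sum fun k hk => ?_
        rw [mem_Icc] at hj hk
        have hN : N (j - k) k i ≤ α₀ :=
          hN_bound _ _ _ (by omega) hk.1 (mem_Icc.2 ⟨hi, by omega⟩)
        have hNp : N (j - k) k i * (1 - p (j - k) k) ≤ α₀ :=
          (mul_le_of_le_one_right (hN_nonneg _ _ _) (by linarith [hp_nonneg (j - k) k])).trans hN
        have ha : a (j - k) k ≤ A * j := by
          have := ha_bound (j - k) k (by omega) hk.1
          rwa [← Nat.cast_add, Nat.sub_add_cancel (by omega)] at this
        calc N (j - k) k i * (1 - p (j - k) k) * a (j - k) k * v (j - k) * v k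
            = N (j - k) k i * (1 - p (j - k) k) * a (j - k) k * (v (j - k) * v k) := by ring
          _ ≤ α₀ * (A * j) * (v (j - k) * v k) :=
            mul_le_mul_of_nonneg_right (mul_le_mul hNp ha (ha_nonneg _ _) hα₀)
              (mul_nonneg (hv _ (by omega)) (hv k hk.1))
          _ = α₀ * A * j * (v (j - k) * v k) := by ring
    _ ≤ ∑ j ∈ Icc 1 n, ∑ k ∈ Icc 1 (j - 1), α₀ * A * j * (v (j - k) * v k) :=
        sum_le_sum_of_subset_of_nonneg (Icc_subset_Icc (by omega) le_rfl)
          fun j _ _ => sum_nonneg (hterm_nonneg j)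
    _ = α₀ * A * ∑ j ∈ Icc 1 n, (j : ℝ) * ∑ k ∈ Icc 1 (j - 1), v k * v (j - k) := by
        simp only [mul_sum]
        refine sum_congr rfl fun j _ => ?_
        rw [← sum_Icc_sub_comm j fun l k => α₀ * A * j * (v k * v l)]
        exact sum_congr rfl fun k _ => by ring

theorem sum_mul_convolution_le (n : ℕ) {v : ℕ → ℝ} (hv : ∀ j, 1 ≤ j → 0 ≤ v j) :
    ∑ j ∈ Icc 1 n, (j : ℝ) * ∑ k ∈ Icc 1 (j - 1), v k * v (j - k)
      ≤ 2 * (∑ k ∈ Icc 1 n, (k : ℝ) * v k) ^ 2 := by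
  have hv' : ∀ k ∈ Icc 1 n, 0 ≤ v k := fun k hk => hv k (mem_Icc.1 hk).1
  have hmass_nonneg : 0 ≤ ∑ k ∈ Icc 1 n, v k := sum_nonneg hv'
  have hnumber_le_mass : ∑ k ∈ Icc 1 n, v k ≤ ∑ k ∈ Icc 1 n, (k : ℝ) * v k :=
    sum_le_sum fun k hk =>
      le_mul_of_one_le_left (hv' k hk) (by exact_mod_cast (mem_Icc.1 hk).1)
  calc ∑ j ∈ Icc 1 n, (j : ℝ) * ∑ k ∈ Icc 1 (j - 1), v k * v (j - k)
      = ∑ l ∈ Icc 1 n, ∑ k ∈ Icc 1 (n - l), ((l : ℝ) + k) * (v l * v k) :=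
        sum_mul_sum_Icc_sub_eq n fun l k => v l * v k
    _ ≤ ∑ l ∈ Icc 1 n, ∑ k ∈ Icc 1 n, ((l : ℝ) + k) * (v l * v k) :=
        sum_le_sum fun l hl => sum_le_sum_of_subset_of_nonneg
          (Icc_subset_Icc le_rfl (Nat.sub_le n l)) fun k hk _ =>
            mul_nonneg (by positivity) (mul_nonneg (hv' l hl) (hv' k hk))
    _ = (∑ l ∈ Icc 1 n, (l : ℝ) * v l) * ∑ k ∈ Icc 1 n, v k
          + (∑ l ∈ Icc 1 n, v l) * ∑ k ∈ Icc 1 n, (k : ℝ) * v k := by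
        rw [sum_mul_sum, sum_mul_sum, ← sum_add_distrib]
        refine sum_congr rfl fun l _ => ?_
        rw [← sum_add_distrib]
        exact sum_congr rfl fun k _ => by ring
    _ ≤ 2 * (∑ k ∈ Icc 1 n, (k : ℝ) * v k) ^ 2 := by nlinarith

theorem truncRHS_le_majorantRHS (hA : 0 ≤ A) (hα₀ : 0 ≤ α₀) (ha_nonneg : ∀ i j, 0 ≤ a i j)
    (ha_bound : ∀ i j, 1 ≤ i → 1 ≤ j → a i j ≤ A * ((i : ℝ) + (j : ℝ)))
    (hp_nonneg : ∀ i j, 0 ≤ p i j) (hp_le : ∀ i j, p i j ≤ 1) (hN_nonneg : ∀ i j s, 0 ≤ N i j s)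
    (hN_bound : ∀ i j s, 1 ≤ i → 1 ≤ j → s ∈ Icc 1 (i + j - 1) → N i j s ≤ α₀)
    {i : ℕ} (hi : 1 ≤ i) {v x : ℕ → ℝ} (hv : ∀ j, 1 ≤ j → 0 ≤ v j)
    (hvx : ∀ j, 1 ≤ j → j < i → v j ≤ x j) :
    truncRHS a p N n i v ≤ majorantRHS A α₀ (∑ k ∈ Icc 1 n, (k : ℝ) * v k) i x := by
  have hgain := coagGain_le ha_nonneg ha_bound hp_le hv hvx
  have hloss : 0 ≤ coagLoss a n i v := sum_nonneg fun j hj =>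
    mul_nonneg (mul_nonneg (ha_nonneg i j) (hv i hi)) (hv j (mem_Icc.1 hj).1)
  have hbreakage := (breakageGain_le (n := n) hA hα₀ ha_nonneg ha_bound hp_nonneg
    hN_nonneg hN_bound hi hv).trans
      (mul_le_mul_of_nonneg_left (sum_mul_convolution_le n hv) (mul_nonneg hα₀ hA))
  rw [truncRHS_eq, majorantRHS]
  linarith

theorem majorantRHS_nonneg (hA : 0 ≤ A) (hα₀ : 0 ≤ α₀) (Λ₁ : ℝ) {i : ℕ} {x : ℕ → ℝ}
    (hx : ∀ j, 1 ≤ j → j < i → 0 ≤ x j) : 0 ≤ majorantRHS A α₀ Λ₁ i x := by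
  have hsum : 0 ≤ ∑ j ∈ Icc 1 (i - 1), (i : ℝ) * x j * x (i - j) := sum_nonneg fun j hj => by
    rw [mem_Icc] at hj
    exact mul_nonneg (mul_nonneg (Nat.cast_nonneg i) (hx j hj.1 (by omega)))
      (hx (i - j) (by omega) (by omega))
  unfold majorantRHS
  positivity

theorem sum_mul_eq_of_hasDerivWithinAt_truncRHS (ha_symm : ∀ i j, a i j = a j i)
    (hN_mass : ∀ i j, 1 ≤ i → 1 ≤ j →
      ∑ s ∈ Icc 1 (i + j - 1), (Nat.cast s : ℝ) * N i j s = (i : ℝ) + (j : ℝ))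
    {T : ℝ} {w : ℕ → ℝ → ℝ}
    (hw_ode : ∀ i ∈ Icc 1 n, ∀ t ∈ Set.Icc (0 : ℝ) T,
      HasDerivWithinAt (w i) (truncRHS a p N n i (fun j => w j t)) (Set.Icc 0 T) t) :
    ∀ t ∈ Set.Icc (0 : ℝ) T, ∑ i ∈ Icc 1 n, (i : ℝ) * w i t = ∑ i ∈ Icc 1 n, (i : ℝ) * w i 0 :=
  eq_of_hasDerivWithinAt_zero_Icc fun t ht => by
    simpa only [sum_mul_truncRHS_eq_zero ha_symm hN_mass] using
      HasDerivWithinAt.fun_sum fun i hi => (hw_ode i hi t ht).const_mul (i : ℝ)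

end

theorem truncated_solution_le_majorant_general
    (T : ℝ) (A α₀ : ℝ) (hA : 0 < A) (hα₀ : 0 < α₀)
    (a p : ℕ → ℕ → ℝ) (N : ℕ → ℕ → ℕ → ℝ)
    (ha_nonneg : ∀ i j, 0 ≤ a i j) (ha_symm : ∀ i j, a i j = a j i)
    (ha_bound : ∀ i j, 1 ≤ i → 1 ≤ j → a i j ≤ A * ((i : ℝ) + (j : ℝ)))
    (hp_nonneg : ∀ i j, 0 ≤ p i j)
    (hp_le : ∀ i j, p i j ≤ 1)
    (hN_nonneg : ∀ i j s, 0 ≤ N i j s)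
    (hN_bound : ∀ i j s, 1 ≤ i → 1 ≤ j → s ∈ Finset.Icc 1 (i+j-1) → N i j s ≤ α₀)
    (hN_mass : ∀ i j, 1 ≤ i → 1 ≤ j →
      ∑ s ∈ Finset.Icc 1 (i+j-1), (Nat.cast s : ℝ) * N i j s = (i : ℝ) + (j : ℝ))
    (n : ℕ)
    (w : ℕ → ℝ → ℝ)
    (hw_nonneg : ∀ i ∈ Finset.Icc 1 n, ∀ t ∈ Set.Icc (0:ℝ) T, 0 ≤ w i t)
    (hw_ode : ∀ i ∈ Finset.Icc 1 n, ∀ t ∈ Set.Icc (0:ℝ) T,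
      HasDerivWithinAt (w i) (truncRHS a p N n i (fun j => w j t)) (Set.Icc 0 T) t)
    (hw_ext : ∀ i, n < i → ∀ t : ℝ, w i t = 0)
    (Λ₁ : ℝ) (hΛ₁ : Λ₁ = ∑' i : ℕ, (Nat.cast i : ℝ) * w i 0)
    (x : ℕ → ℝ → ℝ)
    (hx_ode : ∀ i, 1 ≤ i → ∀ t ∈ Set.Icc (0:ℝ) T,
      HasDerivWithinAt (x i)
        (A / 2 * ∑ j ∈ Finset.Icc 1 (i-1), (Nat.cast i : ℝ) * x j t * x (i-j) t
          + A * α₀ * Λ₁ ^ 2) (Set.Icc 0 T) t)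
    (h_init : ∀ i, 1 ≤ i → w i 0 ≤ x i 0) :
    ∀ i, 1 ≤ i → ∀ t ∈ Set.Icc (0:ℝ) T, w i t ≤ x i t := by
  have hw_pos : ∀ t ∈ Set.Icc (0 : ℝ) T, ∀ j, 1 ≤ j → 0 ≤ w j t := fun t ht j hj => by
    rcases le_or_gt j n with hjn | hjn
    · exact hw_nonneg j (mem_Icc.2 ⟨hj, hjn⟩) t ht
    · exact (hw_ext j hjn t).ge
  have hΛ : ∀ t ∈ Set.Icc (0 : ℝ) T, Λ₁ = ∑ i ∈ Icc 1 n, (i : ℝ) * w i t := fun t ht => by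
    rw [sum_mul_eq_of_hasDerivWithinAt_truncRHS ha_symm hN_mass hw_ode t ht, hΛ₁]
    refine tsum_eq_sum fun i hi => ?_
    rcases Nat.eq_zero_or_pos i with rfl | hi0
    · simp
    · rw [hw_ext i (by rw [mem_Icc] at hi; omega) 0, mul_zero]
  intro i
  induction i using Nat.strong_induction_on with
  | _ i ih =>
  intro hi
  have hwx : ∀ t ∈ Set.Icc (0 : ℝ) T, ∀ j, 1 ≤ j → j < i → w j t ≤ x j t :=
    fun t ht j hj hji => ih j hji hj t ht
  rcases le_or_gt i n with hin | hin
  · refine le_of_hasDerivWithinAt_le_Icc (hw_ode i (mem_Icc.2 ⟨hi, hin⟩)) (hx_ode i hi)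
      (fun t ht => ?_) (h_init i hi)
    rw [hΛ t ht]
    exact truncRHS_le_majorantRHS hA.le hα₀.le ha_nonneg ha_bound hp_nonneg hp_le hN_nonneg
      hN_bound hi (hw_pos t ht) (hwx t ht)
  · have hwi : w i = fun _ => 0 := funext (hw_ext i hin)
    refine le_of_hasDerivWithinAt_le_Icc (fun t _ => hwi ▸ hasDerivWithinAt_const t _ 0)
      (hx_ode i hi) (fun t ht => majorantRHS_nonneg hA.le hα₀.le Λ₁ fun j hj hji =>
        (hw_pos t ht j hj).trans (hwx t ht j hj hji)) (h_init i hi)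

/-- Comparison with the majorant system: if `x = (xᵢ)` solves
`dxᵢ/dt = (A/2) ∑_{j=1}^{i−1} i xⱼ x_{i−j} + A α₀ Λ₁²` and dominates the
(zero-extended) truncated solution initially, it dominates it for all times. -/
theorem truncated_solution_le_majorant
    (T : ℝ) (hT : 0 < T) (A α₀ : ℝ) (hA : 0 < A) (hα₀ : 0 < α₀)
    (a p : ℕ → ℕ → ℝ) (N : ℕ → ℕ → ℕ → ℝ)
    (ha_nonneg : ∀ i j, 0 ≤ a i j) (ha_symm : ∀ i j, a i j = a j i)
    (ha_bound : ∀ i j, 1 ≤ i → 1 ≤ j → a i j ≤ A * ((i : ℝ) + (j : ℝ)))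
    (hp_nonneg : ∀ i j, 0 ≤ p i j) (hp_symm : ∀ i j, p i j = p j i)
    (hp_le : ∀ i j, p i j ≤ 1)
    (hN_nonneg : ∀ i j s, 0 ≤ N i j s) (hN_symm : ∀ i j s, N i j s = N j i s)
    (hN_bound : ∀ i j s, 1 ≤ i → 1 ≤ j → s ∈ Finset.Icc 1 (i+j-1) → N i j s ≤ α₀)
    (hN_mass : ∀ i j, 1 ≤ i → 1 ≤ j →
      ∑ s ∈ Finset.Icc 1 (i+j-1), (Nat.cast s : ℝ) * N i j s = (i : ℝ) + (j : ℝ))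
    (n : ℕ) (hn : 2 ≤ n)
    (w : ℕ → ℝ → ℝ)
    (hw_nonneg : ∀ i ∈ Finset.Icc 1 n, ∀ t ∈ Set.Icc (0:ℝ) T, 0 ≤ w i t)
    (hw_init_nonneg : ∀ i ∈ Finset.Icc 1 n, 0 ≤ w i 0)
    (hw_ode : ∀ i ∈ Finset.Icc 1 n, ∀ t ∈ Set.Icc (0:ℝ) T,
      HasDerivWithinAt (w i) (truncRHS a p N n i (fun j => w j t)) (Set.Icc 0 T) t)
    (hw_ext : ∀ i, n < i → ∀ t : ℝ, w i t = 0)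
    (Λ₁ : ℝ) (hΛ₁ : Λ₁ = ∑' i : ℕ, (Nat.cast i : ℝ) * w i 0)
    (x : ℕ → ℝ → ℝ)
    (hx_ode : ∀ i, 1 ≤ i → ∀ t ∈ Set.Icc (0:ℝ) T,
      HasDerivWithinAt (x i)
        (A / 2 * ∑ j ∈ Finset.Icc 1 (i-1), (Nat.cast i : ℝ) * x j t * x (i-j) t
          + A * α₀ * Λ₁ ^ 2) (Set.Icc 0 T) t)
    (h_init : ∀ i, 1 ≤ i → w i 0 ≤ x i 0) :
    ∀ i, 1 ≤ i → ∀ t ∈ Set.Icc (0:ℝ) T, w i t ≤ x i t :=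
  truncated_solution_le_majorant_general T A α₀ hA hα₀ a p N ha_nonneg ha_symm ha_bound hp_nonneg
    hp_le hN_nonneg hN_bound hN_mass n w hw_nonneg hw_ode hw_ext Λ₁ hΛ₁ x hx_ode h_init
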